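/- Let a := 2 and let b ≥ 6 be an even integer. Let α := η and γ := (b−2)D/(2(1−D)) (the number whose α-expansion has periodic coefficient blocks (0, (b−2)/2)). Then γ ∉ ℤ+αℤ and 4(1−D)·M(α, γ) = η·(1−β)². -/

import Mathlib

open Filter

/-- Distance from a real number to the nearest integer. -/
noncomputable def distNearestInt (x : ℝ) : ℝ := |x - round x|

/-- Inhomogeneous approximation constant
`M(α,γ) = liminf_{n ∈ ℤ, |n| → ∞} |n| · ‖nα - γ‖`. -/
noncomputable def Mconst (α γ : ℝ) : ℝ :=
  Filter.liminf (fun n : ℤ => |(n : ℝ)| * distNearestInt (n * α - γ)) Filter.cofinite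

/-- `γ ∈ ℤ + αℤ`. -/
def inLattice (α γ : ℝ) : Prop := ∃ p q : ℤ, γ = (p : ℝ) + α * (q : ℝ)

/-- `η = [0; a,b,a,b,...]⁻ = (ab - √(a²b² - 4ab)) / (2a)`. -/
noncomputable def eta (a b : ℤ) : ℝ :=
  ((a : ℝ) * b - Real.sqrt (((a : ℝ) * b) ^ 2 - 4 * ((a : ℝ) * b))) / (2 * a)

/-- `β = [0; b,a,b,a,...]⁻ = (ab - √(a²b² - 4ab)) / (2b)`. -/
noncomputable def beta (a b : ℤ) : ℝ :=
  ((a : ℝ) * b - Real.sqrt (((a : ℝ) * b) ^ 2 - 4 * ((a : ℝ) * b))) / (2 * b)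

/-- `D = ηβ`. -/
noncomputable def Dconst (a b : ℤ) : ℝ := eta a b * beta a b

/-- The inhomogeneous Lagrange spectrum `L(α)` for `α = η`. -/
noncomputable def Lspec (a b : ℤ) : Set ℝ :=
  {m | ∃ γ : ℝ, ¬ inLattice (eta a b) γ ∧ m = Mconst (eta a b) γ}

/-- The normalized spectrum `L*(α) = {4(1-D)·M(α,γ) : γ ∉ ℤ + αℤ}` for `α = η`. -/
noncomputable def Lstar (a b : ℤ) : Set ℝ :=
  {m | ∃ γ : ℝ, ¬ inLattice (eta a b) γ ∧
    m = 4 * (1 - Dconst a b) * Mconst (eta a b) γ}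

/-- `v = (mβ - D)/(1 - D)`. -/
noncomputable def vconst (a b m : ℤ) : ℝ :=
  ((m : ℝ) * beta a b - Dconst a b) / (1 - Dconst a b)

/-!
Write `b = 2c`. Then `α = η = c - √(c² - c)` is a root of `x² - 2cx + c`, `D = 2α - 1` and
`γ = (1 - α) / 2`, so `nα - γ - m = ((2n + 1)α - (2m + 1)) / 2`: approximating `γ` amounts to
approximating `α` by fractions `q / p` with `p, q` odd. For those, the norm form
`cp² - 2cpq + q² = (pα - q)(p(2c - α) - q)` has absolute value at least `c - 1`, by a descent along
the automorph `(p, u) ↦ ((2c - 1)p - 2u, (2c - 1)u - 2(c² - c)p)` of `u² - (c² - c)p²`, which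
decreases `|p|` and keeps `p` odd. The value `1 - c` is attained along the orbit of `(1, 1)`, where
moreover `-1 < pα - q < 0`. Together these give `M(α, γ) = (c - 1) / (8(c - α))`.
-/

theorem abs_descent_lt {c P U : ℤ} (hc : 2 ≤ c) (hP : 3 ≤ P) (hU : 0 ≤ U)
    (h : |U ^ 2 - (c ^ 2 - c) * P ^ 2| < c - 1) : |(2 * c - 1) * P - 2 * U| < P := by
  obtain ⟨hlo, hhi⟩ := abs_lt.mp h
  have hP2 : 9 ≤ P ^ 2 := by nlinarith
  rw [abs_lt]
  constructor
  · by_contra! hle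
    have hcP : c * P ≤ U := by linarith
    nlinarith [mul_le_mul hcP hcP (by nlinarith) hU,
      mul_le_mul_of_nonneg_left hP2 (by omega : 0 ≤ c)]
  · by_contra! hle
    have hcP : U ≤ (c - 1) * P := by linarith
    nlinarith [mul_le_mul hcP hcP hU (by nlinarith),
      mul_le_mul_of_nonneg_left hP2 (by omega : 0 ≤ c - 1)]

theorem sub_one_le_abs_sq_sub_mul_sq (c : ℤ) {p : ℤ} (hp : Odd p) (u : ℤ) :
    c - 1 ≤ |u ^ 2 - (c ^ 2 - c) * p ^ 2| := by
  rcases lt_or_ge c 2 with hc | hc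
  · exact (by omega : c - 1 ≤ 0).trans (abs_nonneg _)
  induction hn : p.natAbs using Nat.strong_induction_on generalizing p u with
  | _ n ih =>
  rw [← sq_abs u, ← sq_abs p]
  have hPn : |p| = n := by rw [Int.abs_eq_natAbs, hn]
  obtain ⟨s, hs⟩ : Odd |p| := odd_abs.mpr hp
  have hU : 0 ≤ |u| := abs_nonneg u
  by_contra! hlt
  rcases (by omega : |p| = 1 ∨ 3 ≤ |p|) with h1 | h3
  · obtain ⟨hlo, hhi⟩ := abs_lt.mp hlt
    rw [h1] at hlo hhi
    have : c - 1 < |u| := by nlinarith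
    have : |u| < c := by nlinarith
    omega
  · obtain ⟨hlo, hhi⟩ := abs_lt.mp (abs_descent_lt hc h3 hU hlt)
    have hodd : Odd ((2 * c - 1) * |p| - 2 * |u|) :=
      ⟨(2 * c - 1) * s + c - 1 - |u|, by rw [hs]; ring⟩
    have := ih _ (by omega) hodd ((2 * c - 1) * |u| - 2 * (c ^ 2 - c) * |p|) rfl
    have hinv : ((2 * c - 1) * |u| - 2 * (c ^ 2 - c) * |p|) ^ 2
        - (c ^ 2 - c) * ((2 * c - 1) * |p| - 2 * |u|) ^ 2
        = |u| ^ 2 - (c ^ 2 - c) * |p| ^ 2 := by ring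
    rw [hinv] at this
    linarith

theorem sub_one_le_abs_form (c : ℤ) {p : ℤ} (hp : Odd p) (q : ℤ) :
    c - 1 ≤ |c * p ^ 2 - 2 * c * p * q + q ^ 2| := by
  have h : c * p ^ 2 - 2 * c * p * q + q ^ 2 = (q - c * p) ^ 2 - (c ^ 2 - c) * p ^ 2 := by ring
  rw [h]
  exact sub_one_le_abs_sq_sub_mul_sq c hp (q - c * p)

/-- The orbit of `(1, 1)` under an automorph of the form `c p² - 2c p q + q²`. -/
def formOrbit (c : ℤ) : ℕ → ℤ × ℤ
  | 0 => (1, 1)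
  | k + 1 => ((4 * c - 1) * (formOrbit c k).1 - 2 * (formOrbit c k).2,
      2 * c * (formOrbit c k).1 - (formOrbit c k).2)

theorem odd_formOrbit_fst (c : ℤ) (k : ℕ) : Odd (formOrbit c k).1 := by
  induction k with
  | zero => exact odd_one
  | succ k ih => exact (Odd.mul ⟨2 * c - 1, by ring⟩ ih).sub_even (even_two_mul _)

theorem odd_formOrbit_snd (c : ℤ) (k : ℕ) : Odd (formOrbit c k).2 := by
  induction k with
  | zero => exact odd_one
  | succ k ih => exact ((even_two_mul c).mul_right _).sub_odd ih

theorem formOrbit_form (c : ℤ) (k : ℕ) :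
    c * (formOrbit c k).1 ^ 2 - 2 * c * (formOrbit c k).1 * (formOrbit c k).2
      + (formOrbit c k).2 ^ 2 = 1 - c := by
  induction k with
  | zero => simp only [formOrbit]; ring
  | succ k ih => simp only [formOrbit]; linear_combination ih

theorem formOrbit_snd_mem_Icc {c : ℤ} (hc : 1 ≤ c) (k : ℕ) :
    (formOrbit c k).2 ∈ Set.Icc 1 (formOrbit c k).1 := by
  induction k with
  | zero => simp [formOrbit]
  | succ k ih =>
    obtain ⟨h1, h2⟩ := ih
    simp only [formOrbit, Set.mem_Icc]
    constructor <;> nlinarith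

theorem strictMono_formOrbit_fst {c : ℤ} (hc : 2 ≤ c) : StrictMono fun k => (formOrbit c k).1 :=
  strictMono_nat_of_lt_succ fun k => by
    obtain ⟨h1, h2⟩ := formOrbit_snd_mem_Icc (by omega : 1 ≤ c) k
    simp only [formOrbit]
    nlinarith

theorem liminf_eq_of_frequently_le_of_eventually_ge {ι : Type*} {l : Filter ι} {f : ι → ℝ}
    {a : ℝ} (hfreq : ∃ᶠ i in l, f i ≤ a) (hev : ∀ x < a, ∀ᶠ i in l, x ≤ f i) :
    liminf f l = a := by
  refine le_antisymm (liminf_le_of_frequently_le hfreq ⟨a - 1, hev _ (by linarith)⟩) ?_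
  exact le_of_forall_lt_imp_le_of_dense fun x hx =>
    le_liminf_of_le (IsCoboundedUnder.of_frequently_le hfreq) (hev x hx)

section

variable {c : ℤ} {α : ℝ}

theorem form_eq_mul (hα : α ^ 2 = 2 * c * α - c) (x y : ℝ) :
    c * x ^ 2 - 2 * c * x * y + y ^ 2 = (x * α - y) * (x * α - y + 2 * x * (c - α)) := by
  linear_combination x ^ 2 * hα

theorem formOrbit_approx (hα : α ^ 2 = 2 * c * α - c) (k : ℕ) :
    (formOrbit c k).1 * α - (formOrbit c k).2 = (2 * α - 1) ^ k * (α - 1) := by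
  induction k with
  | zero => simp [formOrbit]
  | succ k ih =>
    simp only [formOrbit]
    push_cast
    linear_combination (2 * α - 1) * ih - 2 * ((formOrbit c k).1 : ℝ) * hα

theorem abs_mul_distNearestInt_le_of_form_eq (hc : 2 ≤ c) (hα : α ^ 2 = 2 * c * α - c)
    (hα1 : α < 1) {n m : ℤ} (hn : 0 ≤ n) (hδ : -1 < (2 * n + 1) * α - (2 * m + 1))
    (hQ : c * (2 * n + 1) ^ 2 - 2 * c * (2 * n + 1) * (2 * m + 1) + (2 * m + 1) ^ 2 = 1 - c) :
    |(n : ℝ)| * distNearestInt (n * α - (1 - α) / 2) ≤ (c - 1) / (8 * (c - α)) := by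
  set δ := (2 * n + 1) * α - (2 * m + 1) with hδdef
  have hcR : (2 : ℝ) ≤ c := by exact_mod_cast hc
  have hcα : 1 < c - α := by linarith
  have hn' : (0 : ℝ) ≤ n := by exact_mod_cast hn
  have hprod : δ * (δ + 2 * (2 * n + 1) * (c - α)) = 1 - c := by
    rw [← form_eq_mul hα]
    exact_mod_cast hQ
  have hconj : 0 < δ + 2 * (2 * n + 1) * (c - α) := by nlinarith
  have hδneg : δ < 0 := by
    by_contra! h
    nlinarith [mul_nonneg h hconj.le]
  have hdist : distNearestInt (n * α - (1 - α) / 2) ≤ -δ / 2 := by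
    refine (round_le _ m).trans_eq ?_
    rw [show n * α - (1 - α) / 2 - m = δ / 2 by rw [hδdef]; ring, abs_div, abs_of_neg hδneg,
      abs_two]
  -- since `c - 1 = -δ (δ + 2(2n + 1)(c - α))`, the claim reduces to `0 ≤ δ + 2(c - α)`
  rw [abs_of_nonneg hn', le_div_iff₀ (by linarith)]
  nlinarith [mul_le_mul_of_nonneg_left hdist (by positivity : (0 : ℝ) ≤ n * (8 * (c - α))),
    mul_pos (neg_pos.mpr hδneg) (by linarith : (0 : ℝ) < δ + 2 * (c - α))]

theorem sub_one_le_distNearestInt_mul (hα : α ^ 2 = 2 * c * α - c) (hcα : 0 ≤ c - α) (n : ℤ) :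
    (c - 1 : ℝ) ≤ 2 * distNearestInt (n * α - (1 - α) / 2)
      * (2 * (2 * |(n : ℝ)| + 1) * (c - α) + 1) := by
  set x := n * α - (1 - α) / 2 with hx
  set δ := (2 * n + 1) * α - (2 * (round x : ℝ) + 1) with hδdef
  have hδ : |δ| = 2 * distNearestInt x := by
    rw [distNearestInt, ← abs_two, ← abs_mul, hδdef, hx]
    congr 1
    ring
  have hδ1 : |δ| ≤ 1 := by
    have : distNearestInt x ≤ 1 / 2 := abs_sub_round x
    linarith
  have hQ : (c - 1 : ℝ) ≤ |δ * (δ + 2 * (2 * n + 1) * (c - α))| := by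
    rw [← form_eq_mul hα]
    exact_mod_cast sub_one_le_abs_form c (⟨n, rfl⟩ : Odd (2 * n + 1)) (2 * round x + 1)
  have hn : |2 * (n : ℝ) + 1| ≤ 2 * |(n : ℝ)| + 1 :=
    (abs_add_le _ _).trans (by rw [abs_mul, abs_two, abs_one])
  have hconj : |δ + 2 * (2 * n + 1) * (c - α)| ≤ 2 * (2 * |(n : ℝ)| + 1) * (c - α) + 1 := by
    calc _ ≤ |δ| + |2 * (2 * n + 1) * (c - α)| := abs_add_le _ _
      _ ≤ 1 + 2 * (2 * |(n : ℝ)| + 1) * (c - α) := by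
        rw [abs_mul, abs_mul, abs_two, abs_of_nonneg hcα]
        gcongr
      _ = _ := add_comm _ _
  calc (c - 1 : ℝ) ≤ |δ| * |δ + 2 * (2 * n + 1) * (c - α)| := by rwa [← abs_mul]
    _ ≤ _ := by
      rw [hδ]
      exact mul_le_mul_of_nonneg_left hconj (hδ ▸ abs_nonneg δ)

theorem eventually_le_abs_mul_distNearestInt (hα : α ^ 2 = 2 * c * α - c) (hcα : 0 < c - α)
    {x : ℝ} (hx : x < (c - 1) / (8 * (c - α))) :
    ∀ᶠ n : ℤ in cofinite, x ≤ |(n : ℝ)| * distNearestInt (n * α - (1 - α) / 2) := by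
  rcases le_or_gt x 0 with hx0 | hx0
  · exact Eventually.of_forall fun n =>
      hx0.trans (mul_nonneg (abs_nonneg _) (abs_nonneg _))
  have hε : 0 < (c - 1) - 8 * x * (c - α) := by
    rw [lt_div_iff₀ (by positivity)] at hx
    linarith
  have habs : Tendsto (fun n : ℤ => |(n : ℝ)|) cofinite atTop :=
    tendsto_norm_cocompact_atTop.comp Int.tendsto_coe_cofinite
  filter_upwards
    [tendsto_atTop.mp habs (2 * x * (2 * (c - α) + 1) / ((c - 1) - 8 * x * (c - α)))] with n hn
  rw [div_le_iff₀ hε] at hn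
  have key := sub_one_le_distNearestInt_mul hα hcα.le n
  -- with `key`, `|n| d < x` would force `|n| ((c - 1) - 8x(c - α)) < 2x(2(c - α) + 1)`
  by_contra! hlt
  set t := |(n : ℝ)|
  have ht : 0 ≤ t := abs_nonneg _
  nlinarith [mul_le_mul_of_nonneg_left key ht, mul_lt_mul_of_pos_right hlt
    (by positivity : (0 : ℝ) < 8 * t * (c - α) + 2 * (2 * (c - α) + 1))]

theorem abs_mul_distNearestInt_formOrbit_le (hc : 2 ≤ c) (hα : α ^ 2 = 2 * c * α - c)
    (hα1 : α < 1) (k : ℕ) :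
    |((((formOrbit c k).1 - 1) / 2 : ℤ) : ℝ)|
      * distNearestInt ((((formOrbit c k).1 - 1) / 2 : ℤ) * α - (1 - α) / 2)
      ≤ (c - 1) / (8 * (c - α)) := by
  obtain ⟨n, hn⟩ := odd_formOrbit_fst c k
  obtain ⟨m, hm⟩ := odd_formOrbit_snd c k
  obtain ⟨hq1, hqp⟩ := formOrbit_snd_mem_Icc (by omega : 1 ≤ c) k
  have hδ := formOrbit_approx hα k
  have hQ := formOrbit_form c k
  rw [hn, hm] at hQ hδ
  push_cast at hδ
  rw [hn, show (2 * n + 1 - 1) / 2 = n by omega]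
  have h2α : 0 ≤ 2 * α - 1 := by
    refine nonneg_of_mul_nonneg_right (a := (c : ℝ)) ?_ (by positivity)
    rw [show (c : ℝ) * (2 * α - 1) = α ^ 2 by linear_combination -hα]
    positivity
  refine abs_mul_distNearestInt_le_of_form_eq hc hα hα1 (by omega) ?_ hQ
  rw [hδ]
  nlinarith [pow_nonneg h2α k, pow_le_one₀ (n := k) h2α (by linarith : 2 * α - 1 ≤ 1)]

theorem mconst_one_sub_div_two (hc : 2 ≤ c) (hα : α ^ 2 = 2 * c * α - c) (hα1 : α < 1) :
    Mconst α ((1 - α) / 2) = (c - 1) / (8 * (c - α)) := by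
  have hcα : 0 < c - α := by
    have : (2 : ℝ) ≤ c := by exact_mod_cast hc
    linarith
  refine liminf_eq_of_frequently_le_of_eventually_ge ?_ fun x hx =>
    eventually_le_abs_mul_distNearestInt hα hcα hx
  have hinj : Function.Injective fun k => ((formOrbit c k).1 - 1) / 2 := by
    intro j k h
    apply (strictMono_formOrbit_fst hc).injective
    obtain ⟨a, ha⟩ := odd_formOrbit_fst c j
    obtain ⟨b, hb⟩ := odd_formOrbit_fst c k
    simp only at h ⊢
    omega
  exact frequently_cofinite_iff_infinite.mpr <|
    Set.infinite_of_injective_forall_mem hinj (abs_mul_distNearestInt_formOrbit_le hc hα hα1)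

end

theorem irrational_of_sq_eq {c : ℤ} {α : ℝ} (hc : 2 ≤ c) (hα : α ^ 2 = 2 * c * α - c) :
    Irrational α := by
  rintro ⟨r, rfl⟩
  have hsq : IsSquare ((c ^ 2 - c : ℤ) : ℚ) :=
    ⟨r - c, by
      have : ((r ^ 2 : ℚ) : ℝ) = ((2 * c * r - c : ℚ) : ℝ) := by push_cast; exact hα
      push_cast
      linear_combination -Rat.cast_injective this⟩
  obtain ⟨z, hz⟩ := Rat.isSquare_intCast_iff.mp hsq
  rcases le_total 0 z with hz0 | hz0
  · have : z < c := by nlinarith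
    have : c - 1 < z := by nlinarith
    omega
  · have : -c < z := by nlinarith
    have : z < 1 - c := by nlinarith
    omega

theorem not_inLattice_one_sub_div_two {α : ℝ} (hα : Irrational α) :
    ¬ inLattice α ((1 - α) / 2) := by
  rintro ⟨p, q, h⟩
  apply (hα.mul_intCast (m := 2 * q + 1) (by omega)).ne_int (1 - 2 * p)
  push_cast
  linarith

theorem eta_two_two_mul (c : ℤ) : eta 2 (2 * c) = c - √(c ^ 2 - c) := by
  have h16 : ((2 : ℝ) * (2 * c)) ^ 2 - 4 * (2 * (2 * c)) = 4 ^ 2 * (c ^ 2 - c) := by ring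
  rw [eta]
  push_cast
  rw [h16, Real.sqrt_mul (by norm_num), Real.sqrt_sq (by norm_num)]
  ring

theorem beta_two_two_mul (c : ℤ) : beta 2 (2 * c) = eta 2 (2 * c) / c := by
  rw [beta, eta, div_div]
  push_cast
  ring_nf

theorem eta_two_two_mul_sq (c : ℤ) : eta 2 (2 * c) ^ 2 = 2 * c * eta 2 (2 * c) - c := by
  have hcc : (0 : ℝ) ≤ c ^ 2 - c := by
    have : (0 : ℤ) ≤ c ^ 2 - c := by rcases le_or_gt c 0 with h | h <;> nlinarith
    exact_mod_cast this
  rw [eta_two_two_mul]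
  linear_combination Real.sq_sqrt hcc

theorem eta_two_two_mul_lt_one {c : ℤ} (hc : 2 ≤ c) : eta 2 (2 * c) < 1 := by
  have hcR : (2 : ℝ) ≤ c := by exact_mod_cast hc
  rw [eta_two_two_mul, sub_lt_comm, Real.lt_sqrt (by linarith)]
  nlinarith

theorem dconst_two_two_mul {c : ℤ} (hc : c ≠ 0) : Dconst 2 (2 * c) = 2 * eta 2 (2 * c) - 1 := by
  rw [Dconst, beta_two_two_mul]
  field_simp
  linear_combination eta_two_two_mul_sq c

theorem stmt18 (b : ℤ) (hb : 6 ≤ b) (hbe : Even b) :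
    ¬ inLattice (eta 2 b)
        (((b : ℝ) - 2) * Dconst 2 b / (2 * (1 - Dconst 2 b))) ∧
    4 * (1 - Dconst 2 b) *
        Mconst (eta 2 b) (((b : ℝ) - 2) * Dconst 2 b / (2 * (1 - Dconst 2 b))) =
      eta 2 b * (1 - beta 2 b) ^ 2 := by
  obtain ⟨c, rfl⟩ := hbe
  rw [← two_mul] at hb ⊢
  have hc : 2 ≤ c := by omega
  have hcR : (2 : ℝ) ≤ c := by exact_mod_cast hc
  rw [dconst_two_two_mul (by omega), beta_two_two_mul]
  have hα := eta_two_two_mul_sq c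
  have hα1 := eta_two_two_mul_lt_one hc
  set α := eta 2 (2 * c)
  have hγ : (((2 * c : ℤ) : ℝ) - 2) * (2 * α - 1) / (2 * (1 - (2 * α - 1))) = (1 - α) / 2 := by
    rw [div_eq_div_iff (by linarith) two_ne_zero]
    push_cast
    linear_combination (-4) * hα
  rw [hγ, mconst_one_sub_div_two hc hα hα1]
  refine ⟨not_inLattice_one_sub_div_two (irrational_of_sq_eq hc hα), ?_⟩
  have : (c : ℝ) - α ≠ 0 := by linarith
  field_simp
  linear_combination 8 * (c ^ 2 - c - α * c + α ^ 2) * hα
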